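/- Moyal identity: let x, ψ ∈ L²(ℝ), and for (τ,ν) ∈ ℝ² define the short-time Fourier transform V_ψx(τ,ν) = ∫_ℝ x(t) · conj(ψ(t−τ)) · e^{-2πiνt} dt (the integrand is integrable for every (τ,ν) by the Cauchy–Schwarz inequality). Then ∫_ℝ ∫_ℝ |V_ψx(τ,ν)|² dν dτ = ‖x‖²_{L²} · ‖ψ‖²_{L²}. -/

import Mathlib

/-!
For almost every `τ` the function `t ↦ x t * conj (ψ (t - τ))` lies in `L¹ ∩ L²`, and
`V_ψx(τ, ·)` is its Fourier transform; Plancherel turns the inner integral into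
`∫ |x t|² |ψ (t - τ)|² dt`, and Fubini with translation invariance of Lebesgue measure gives
`‖x‖² ‖ψ‖²`.

Plancherel for `L¹ ∩ L²` functions comes from the unitary Fourier transform on `L²` once this is
identified with the Fourier integral: tested against a smooth compactly supported `φ`, both give
`∫ 𝓕 φ • f`, by self-adjointness of the Fourier transform.
-/

open MeasureTheory

/-- The short-time Fourier transform `V_ψx(τ,ν) = ∫ x(t) conj(ψ(t-τ)) e^{-2πiνt} dt`. -/
noncomputable def stft (ψ x : ℝ → ℂ) (τ ν : ℝ) : ℂ :=
  ∫ t : ℝ, x t * (starRingEnd ℂ) (ψ (t - τ)) *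
    Complex.exp (-2 * Real.pi * Complex.I * ν * t)

open scoped FourierTransform ComplexConjugate

theorem MeasureTheory.Lp.norm_sq_eq_integral_norm_sq {α E : Type*} [MeasurableSpace α]
    {μ : Measure α} [NormedAddCommGroup E] (f : Lp E 2 μ) :
    ‖f‖ ^ 2 = ∫ a, ‖f a‖ ^ 2 ∂μ := by
  have hf := (Lp.memLp f).aestronglyMeasurable
  rw [Lp.norm_def, toReal_eLpNorm hf,
    lpNorm_eq_integral_norm_rpow_toReal two_ne_zero ENNReal.ofNat_ne_top hf]
  simp only [ENNReal.toReal_ofNat, Real.rpow_two]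
  rw [← Real.rpow_natCast, ← Real.rpow_mul (integral_nonneg fun a => by positivity)]
  norm_num

theorem MeasureTheory.Integrable.mul_comp_sub_prod {G : Type*} [AddGroup G] [MeasurableSpace G]
    [MeasurableAdd₂ G] [MeasurableNeg G] {μ : Measure G} [SFinite μ] [μ.IsAddRightInvariant]
    [μ.IsNegInvariant] {f g : G → ℝ} (hf : Integrable f μ) (hg : Integrable g μ) :
    Integrable (fun p : G × G => f p.2 * g (p.2 - p.1)) (μ.prod μ) := by
  simpa only [ContinuousLinearMap.mul_apply', neg_sub] using
    hf.convolution_integrand (ContinuousLinearMap.mul ℝ ℝ) hg.comp_neg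

section Plancherel

variable {V F : Type*} [NormedAddCommGroup V] [InnerProductSpace ℝ V] [FiniteDimensional ℝ V]
  [MeasurableSpace V] [BorelSpace V]
  [NormedAddCommGroup F] [InnerProductSpace ℂ F] [CompleteSpace F]

theorem Real.integral_fourier_smul_eq {f : V → ℂ} {g : V → F} (hf : Integrable f)
    (hg : Integrable g) : ∫ ξ, 𝓕 f ξ • g ξ = ∫ x, f x • 𝓕 g x := by
  simpa using! VectorFourier.integral_fourierIntegral_smul_eq_flip (L := innerₗ V)
    Real.continuous_fourierChar continuous_inner hf hg

theorem MeasureTheory.MemLp.coeFn_fourier_toLp {f : V → F} (hf₂ : MemLp f 2)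
    (hf₁ : Integrable f) : ((𝓕 (hf₂.toLp f) : Lp F 2 volume) : V → F) =ᵐ[volume] 𝓕 f := by
  refine ae_eq_of_integral_contDiff_smul_eq ((Lp.memLp _).locallyIntegrable one_le_two)
    (VectorFourier.fourierIntegral_continuous Real.continuous_fourierChar continuous_inner
      hf₁).locallyIntegrable fun g hg hg_supp => ?_
  set φ : SchwartzMap V ℂ := (hg_supp.comp_left Complex.ofReal_zero).toSchwartzMap
    (Complex.ofRealCLM.contDiff.comp hg)
  have hφ : ⇑φ = fun x => (g x : ℂ) := rfl
  calc ∫ x, g x • (𝓕 (hf₂.toLp f) : Lp F 2 volume) x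
      = Lp.toTemperedDistribution (𝓕 (hf₂.toLp f) : Lp F 2 volume) φ := by
        simp only [Lp.toTemperedDistribution_apply, hφ, Complex.coe_smul]
    _ = Lp.toTemperedDistribution (hf₂.toLp f) (𝓕 φ) := by
        rw [← Lp.fourier_toTemperedDistribution_eq]
        rfl
    _ = ∫ x, 𝓕 (φ : V → ℂ) x • f x := by
        rw [Lp.toTemperedDistribution_apply, SchwartzMap.fourier_coe]
        exact integral_congr_ae (hf₂.coeFn_toLp.mono fun x h => congrArg (𝓕 (φ : V → ℂ) x • ·) h)
    _ = ∫ ξ, g ξ • 𝓕 f ξ := by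
        rw [Real.integral_fourier_smul_eq φ.integrable hf₁]
        simp only [hφ, Complex.coe_smul]

theorem MeasureTheory.Integrable.integral_norm_sq_fourier {f : V → F} (hf₁ : Integrable f)
    (hf₂ : MemLp f 2) : ∫ ξ, ‖𝓕 f ξ‖ ^ 2 = ∫ x, ‖f x‖ ^ 2 :=
  calc ∫ ξ, ‖𝓕 f ξ‖ ^ 2 = ∫ ξ, ‖(𝓕 (hf₂.toLp f) : Lp F 2 volume) ξ‖ ^ 2 :=
        integral_congr_ae <| (hf₂.coeFn_fourier_toLp hf₁).mono fun ξ h =>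
          congrArg (‖·‖ ^ 2) h.symm
    _ = ∫ x, ‖hf₂.toLp f x‖ ^ 2 := by
        rw [← Lp.norm_sq_eq_integral_norm_sq, ← Lp.norm_sq_eq_integral_norm_sq,
          Lp.norm_fourier_eq]
    _ = ∫ x, ‖f x‖ ^ 2 := integral_congr_ae <| hf₂.coeFn_toLp.mono fun x h => congrArg (‖·‖ ^ 2) h

end Plancherel

theorem stft_eq_fourier (ψ x : ℝ → ℂ) (τ ν : ℝ) :
    stft ψ x τ ν = 𝓕 (fun t => x t * conj (ψ (t - τ))) ν := by
  rw [stft, Real.fourier_real_eq_integral_exp_smul]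
  congr 1 with t
  rw [smul_eq_mul, mul_comm]
  congr 2
  push_cast
  ring

/-- Moyal identity: for `x, ψ ∈ L²(ℝ)`,
`∫∫ |V_ψx(τ,ν)|² dν dτ = ‖x‖² ‖ψ‖²`. -/
theorem moyal_identity
    (x ψ : ℝ → ℂ) (hx : MemLp x 2 (volume : Measure ℝ))
    (hψ : MemLp ψ 2 (volume : Measure ℝ)) :
    (∫ τ : ℝ, ∫ ν : ℝ, ‖stft ψ x τ ν‖ ^ 2) =
      (∫ t : ℝ, ‖x t‖ ^ 2) * ∫ t : ℝ, ‖ψ t‖ ^ 2 := by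
  set F : ℝ → ℝ → ℂ := fun τ t => x t * conj (ψ (t - τ))
  have hF_norm : ∀ τ t, ‖F τ t‖ ^ 2 = ‖x t‖ ^ 2 * ‖ψ (t - τ)‖ ^ 2 := by simp [F, mul_pow]
  have hF_int : ∀ τ, Integrable (F τ) := fun τ =>
    hx.integrable_mul (hψ.comp_measurePreserving (measurePreserving_sub_right volume τ)).star
  have hprod : Integrable (fun p : ℝ × ℝ => ‖x p.2‖ ^ 2 * ‖ψ (p.2 - p.1)‖ ^ 2)
      (volume.prod volume) :=
    (hx.integrable_norm_pow two_ne_zero).mul_comp_sub_prod (hψ.integrable_norm_pow two_ne_zero)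
  have hF_L2 : ∀ᵐ τ, MemLp (F τ) 2 := hprod.prod_right_ae.mono fun τ h =>
    (memLp_two_iff_integrable_sq_norm (hF_int τ).1).2 (by simpa only [hF_norm] using h)
  calc ∫ τ, ∫ ν, ‖stft ψ x τ ν‖ ^ 2 = ∫ τ, ∫ t, ‖x t‖ ^ 2 * ‖ψ (t - τ)‖ ^ 2 :=
        integral_congr_ae <| hF_L2.mono fun τ h => by
          simp only [stft_eq_fourier, (hF_int τ).integral_norm_sq_fourier h, F, hF_norm]
    _ = ∫ t, ∫ τ, ‖x t‖ ^ 2 * ‖ψ (t - τ)‖ ^ 2 := integral_integral_swap hprod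
    _ = ∫ t, ‖x t‖ ^ 2 * ∫ s, ‖ψ s‖ ^ 2 := by
        simp only [integral_const_mul, integral_sub_left_eq_self (fun s => ‖ψ s‖ ^ 2)]
    _ = _ := integral_mul_const _ _
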